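/- Let G be the star K_{1,n−1} on n ≥ 2 vertices (one center vertex adjacent to n−1 leaves, with no other edges). Then for every integer k with 1 ≤ k ≤ n, G is not strongly equitably DP k-colorable; that is, there exists a k-cover H of G admitting no strongly ⌈n/k⌉-bounded H-coloring. -/
import Mathlib


/-- A DP-cover (correspondence cover) of a graph `G` with colors in `Γ`:
lists `L v`, and a symmetric adjacency relation between nodes `(v, γ)`
that projects to edges of `G` and is a partial matching between fibers. -/
structure DPCover {V : Type*} (G : SimpleGraph V) (Γ : Type*) where
  L : V → Finset Γ
  Adj : V × Γ → V × Γ → Prop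
  symm : ∀ p q, Adj p q → Adj q p
  adj_sub : ∀ u α w β, Adj (u, α) (w, β) → G.Adj u w ∧ α ∈ L u ∧ β ∈ L w
  matching : ∀ u α w β β', Adj (u, α) (w, β) → Adj (u, α) (w, β') → β = β'

/-- `H` is a `k`-cover: every list has size `k`. -/
def DPCover.IsKCover {V Γ : Type*} {G : SimpleGraph V} (H : DPCover G Γ) (k : ℕ) : Prop :=
  ∀ v, (H.L v).card = k

/-- An `H`-coloring: a choice from every list whose graph is independent in the cover. -/
def DPCover.IsColoring {V Γ : Type*} {G : SimpleGraph V} (H : DPCover G Γ) (f : V → Γ) : Prop :=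
  (∀ v, f v ∈ H.L v) ∧ ∀ u w, ¬ H.Adj (u, f u) (w, f w)

/-- The size of the color class of `γ` under `f`. -/
def classSize {V Γ : Type*} [Fintype V] [DecidableEq Γ] (f : V → Γ) (γ : Γ) : ℕ :=
  (Finset.univ.filter fun v => f v = γ).card

/-- Every color class has size at most `m`. -/
def IsBounded {V Γ : Type*} [Fintype V] [DecidableEq Γ] (m : ℕ) (f : V → Γ) : Prop :=
  ∀ γ, classSize f γ ≤ m

/-- `f` is `⌈n/k⌉`-bounded and at most `n % k` color classes have size `⌊n/k⌋ + 1`. -/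
def IsStronglyBounded {V Γ : Type*} [Fintype V] [DecidableEq Γ] (n k : ℕ) (f : V → Γ) : Prop :=
  IsBounded ((n + k - 1) / k) f ∧
  ((Finset.univ.image f).filter fun γ => classSize f γ = n / k + 1).card ≤ n % k

/-- `G` is equitably DP `k`-colorable: every `k`-cover admits a `⌈n/k⌉`-bounded coloring. -/
def EDPColorable {V : Type*} [Fintype V] (G : SimpleGraph V) (k : ℕ) : Prop :=
  ∀ H : DPCover G ℕ, H.IsKCover k →
    ∃ f, H.IsColoring f ∧ IsBounded ((Fintype.card V + k - 1) / k) f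

/-- `G` is strongly equitably DP `k`-colorable: every `k`-cover admits a strongly
`⌈n/k⌉`-bounded coloring. -/
def SEDPColorable {V : Type*} [Fintype V] (G : SimpleGraph V) (k : ℕ) : Prop :=
  ∀ H : DPCover G ℕ, H.IsKCover k →
    ∃ f, H.IsColoring f ∧ IsStronglyBounded (Fintype.card V) k f

/-- The star `K_{1,n-1}` on `n` vertices: center `0` adjacent to all other
vertices, and no other edges. -/
def starGraph (n : ℕ) : SimpleGraph (Fin n) :=
  SimpleGraph.fromRel (fun a _ => a.val = 0)

lemma aux_mod_succ_inj {k a b : ℕ} (ha : a < k) (hb : b < k)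
    (h : (a + 1) % k = (b + 1) % k) : a = b := by
  rcases Nat.lt_or_ge (a + 1) k with h1 | h1
  · rw [Nat.mod_eq_of_lt h1] at h
    rcases Nat.lt_or_ge (b + 1) k with h2 | h2
    · rw [Nat.mod_eq_of_lt h2] at h; omega
    · have hb1 : b + 1 = k := by omega
      rw [hb1, Nat.mod_self] at h; omega
  · have ha1 : a + 1 = k := by omega
    rw [ha1, Nat.mod_self] at h
    rcases Nat.lt_or_ge (b + 1) k with h2 | h2
    · rw [Nat.mod_eq_of_lt h2] at h; omega
    · have hb1 : b + 1 = k := by omega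
      omega

/-- The bad `k`-cover of the star: all lists are `{0, …, k-1}`, and on each edge
from the center, center-color `i` is matched with leaf-color `(i+1) % k`. -/
def badCover (n k : ℕ) : DPCover (starGraph n) ℕ where
  L _ := Finset.range k
  Adj p q :=
    (p.1.val = 0 ∧ q.1.val ≠ 0 ∧ p.2 < k ∧ q.2 = (p.2 + 1) % k) ∨
    (q.1.val = 0 ∧ p.1.val ≠ 0 ∧ q.2 < k ∧ p.2 = (q.2 + 1) % k)
  symm p q h := by tauto
  adj_sub u α w β h := by
    rcases h with ⟨h1, h2, h3, h4⟩ | ⟨h1, h2, h3, h4⟩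
    · have h3' : α < k := h3
      have h4' : β = (α + 1) % k := h4
      have hk : 0 < k := by omega
      refine ⟨?_, ?_, ?_⟩
      · simp only [starGraph, SimpleGraph.fromRel_adj]
        exact ⟨fun e => h2 (e ▸ h1), Or.inl h1⟩
      · simpa using h3'
      · simpa [h4'] using Nat.mod_lt (α + 1) hk
    · have h3' : β < k := h3
      have h4' : α = (β + 1) % k := h4
      have hk : 0 < k := by omega
      refine ⟨?_, ?_, ?_⟩
      · simp only [starGraph, SimpleGraph.fromRel_adj]
        exact ⟨fun e => h2 (e.symm ▸ h1), Or.inr h1⟩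
      · simpa [h4'] using Nat.mod_lt (β + 1) hk
      · simpa using h3'
  matching u α w β β' h h' := by
    rcases h with ⟨h1, h2, h3, h4⟩ | ⟨h1, h2, h3, h4⟩ <;>
      rcases h' with ⟨g1, g2, g3, g4⟩ | ⟨g1, g2, g3, g4⟩
    · have h4' : β = (α + 1) % k := h4
      have g4' : β' = (α + 1) % k := g4
      omega
    · exact absurd h1 g2
    · exact absurd g1 h2
    · have h3' : β < k := h3
      have g3' : β' < k := g3
      have h4' : α = (β + 1) % k := h4
      have g4' : α = (β' + 1) % k := g4
      exact aux_mod_succ_inj h3' g3' (by omega)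

/-- For `n ≥ 2` and `1 ≤ k ≤ n`, the star `K_{1,n-1}` is not strongly equitably
DP `k`-colorable: some `k`-cover admits no strongly `⌈n/k⌉`-bounded coloring. -/
theorem star_not_SEDP_colorable (n : ℕ) (hn : 2 ≤ n) (k : ℕ) (hk1 : 1 ≤ k) (hk2 : k ≤ n) :
    ¬ SEDPColorable (starGraph n) k := by
  intro hS
  classical
  obtain ⟨f, hcol, hsb⟩ := hS (badCover n k) (fun v => Finset.card_range k)
  obtain ⟨hmem, hadj⟩ := hcol
  have hfk : ∀ v, f v < k := fun v => Finset.mem_range.mp (hmem v)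
  have h0n : (0 : ℕ) < n := by omega
  set v0 : Fin n := ⟨0, h0n⟩ with hv0
  set c : ℕ := f v0 with hc
  set c' : ℕ := (c + 1) % k with hc'
  -- every leaf avoids c'
  have hleaf : ∀ v : Fin n, v.val ≠ 0 → f v ≠ c' := by
    intro v hv he
    exact hadj v0 v (Or.inl ⟨rfl, hv, hfk v0, he⟩)
  -- handle k = 1 directly
  by_cases hk1' : k = 1
  · have h1n : (1 : ℕ) < n := by omega
    have := hleaf ⟨1, h1n⟩ (by simp)
    have h2 := hfk ⟨1, h1n⟩
    have h3 := hfk v0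
    have : c' = 0 := by simp [hc', hk1', Nat.mod_one]
    omega
  have hk2' : 2 ≤ k := by omega
  -- center's color differs from c'
  have hcne : c ≠ c' := by
    have hck := hfk v0
    rcases Nat.lt_or_ge (c + 1) k with h | h
    · rw [hc', Nat.mod_eq_of_lt h]; omega
    · have : c + 1 = k := by omega
      rw [hc', this, Nat.mod_self]; omega
  -- c' is not in the image of f
  have hnotim : c' ∉ Finset.univ.image f := by
    simp only [Finset.mem_image, Finset.mem_univ, true_and, not_exists]
    intro v hv
    by_cases h0 : v.val = 0
    · have : v = v0 := Fin.ext h0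
      rw [this] at hv
      exact hcne hv
    · exact hleaf v h0 hv
  obtain ⟨hb, hcnt⟩ := hsb
  simp only [Fintype.card_fin] at hb hcnt
  set q : ℕ := n / k with hq
  set r : ℕ := n % k with hr
  have hceil : (n + k - 1) / k ≤ q + 1 := by
    calc (n + k - 1) / k ≤ (n + k) / k := Nat.div_le_div_right (by omega)
    _ = q + 1 := Nat.add_div_right n hk1
  set S : Finset ℕ := Finset.univ.image f with hS
  have hsum : n = ∑ γ ∈ S, classSize f γ := by
    have h := Finset.card_eq_sum_card_fiberwise
      (f := f) (s := (Finset.univ : Finset (Fin n))) (t := S)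
      (fun x _ => Finset.mem_image_of_mem f (Finset.mem_univ x))
    simpa [classSize] using h
  set T : Finset ℕ := S.filter (fun γ => classSize f γ = q + 1) with hT
  set T' : Finset ℕ := S.filter (fun γ => ¬ classSize f γ = q + 1) with hT'
  have hsplit : ∑ γ ∈ T, classSize f γ + ∑ γ ∈ T', classSize f γ = ∑ γ ∈ S, classSize f γ :=
    Finset.sum_filter_add_sum_filter_not S _ _
  have h1 : ∑ γ ∈ T, classSize f γ ≤ T.card * (q + 1) := by
    have := Finset.sum_le_card_nsmul T (fun γ => classSize f γ) (q + 1)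
      (fun γ hγ => by
        have he : classSize f γ = q + 1 := (Finset.mem_filter.mp hγ).2
        show classSize f γ ≤ q + 1
        omega)
    simpa using this
  have h2 : ∑ γ ∈ T', classSize f γ ≤ T'.card * q := by
    have := Finset.sum_le_card_nsmul T' (fun γ => classSize f γ) q
      (fun γ hγ => by
        have hne : ¬ classSize f γ = q + 1 := (Finset.mem_filter.mp hγ).2
        have hle := hb γ
        show classSize f γ ≤ q
        omega)
    simpa using this
  have hcards : T.card + T'.card = S.card :=
    Finset.card_filter_add_card_filter_not (p := fun γ => classSize f γ = q + 1)
  have hTr : T.card ≤ r := hcnt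
  have hc'k : c' < k := Nat.mod_lt _ (by omega)
  have hSsub : S ⊆ (Finset.range k).erase c' := by
    rw [Finset.subset_erase]
    constructor
    · intro γ hγ
      obtain ⟨v, _, hv⟩ := Finset.mem_image.mp hγ
      exact Finset.mem_range.mpr (hv ▸ hfk v)
    · exact hnotim
  have hScard : S.card ≤ k - 1 := by
    have := Finset.card_le_card hSsub
    rwa [Finset.card_erase_of_mem (Finset.mem_range.mpr hc'k), Finset.card_range] at this
  have hto : n ≤ T.card + (T.card + T'.card) * q := by
    have key : T.card * (q + 1) + T'.card * q = T.card + (T.card + T'.card) * q := by ring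
    omega
  have h5 : (T.card + T'.card) * q ≤ (k - 1) * q :=
    Nat.mul_le_mul_right q (by omega)
  have h6 : (k - 1) * q = k * q - q := Nat.sub_one_mul k q
  have h7 : q ≤ k * q := Nat.le_mul_of_pos_left q (by omega)
  have h8 : k * q + r = n := Nat.div_add_mod n k
  have hq1 : 1 ≤ q := (Nat.one_le_div_iff (by omega)).mpr hk2
  have hfin : n ≤ r + (k * q - q) := by
    calc n ≤ T.card + (T.card + T'.card) * q := hto
    _ ≤ r + (k - 1) * q := Nat.add_le_add hTr h5
    _ = r + (k * q - q) := by rw [h6]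
  omega
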